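/- Let λ = (λ_1 ≥ ⋯ ≥ λ_N ≥ 0) be a partition with at most N parts. For every θ ∈ M^(N) that does NOT belong to Pol_λ, i.e. for which the inequality 0 ≤ θ_{i,j} ≤ λ_i − λ_{i+1} − Σ_{k=j+1}^{N}(θ_{i,k} − θ_{i+1,k}) fails for some 1 ≤ i < j ≤ N, the specialization z_i = 𝔱^{N−i} q^{λ_i} yields c_N(θ; 𝔱^{N−1}q^{λ_1}, 𝔱^{N−2}q^{λ_2},…, q^{λ_N}; q,𝔱) = 0 in ℚ(q,𝔱) (the numerator acquires a vanishing q-Pochhammer factor while the denominator stays nonzero). Hence under this specialization the formal series f_N(y,z;q,𝔱) = y^λ Σ_{θ∈M^(N)} c_N(θ;z;q,𝔱)∏_{i<j}(y_j/y_i)^{θ_{ij}} terminates to a finite sum over θ ∈ Pol_λ. -/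

import Mathlib

/-!
STATEMENT 5: under the principal specialization `z_i = 𝔱^{N-i}q^{λ_i}`, the
coefficient `c_N(θ;…;q,𝔱)` vanishes for every `θ ∈ M^(N) \ Pol_λ`; hence the
series `f_N/y^λ` terminates to the finite sum over `θ ∈ Pol_λ` (stated as an
equality of the coefficient functions of the two generating series in
`MvPowerSeries ℕ ℚ(q,𝔱)`, the variables being `u_m = y_{m+1}/y_m`).
Variables of the coefficient field: `X 0 = q`, `X 1 = 𝔱`.
-/

noncomputable section
open Finset

/-- The q-Pochhammer symbol `(a;q)_n`. -/
def qPoch {K : Type*} [CommRing K] (a q : K) (n : ℕ) : K :=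
  ∏ k ∈ Finset.range n, (1 - a * q ^ k)

/-- θ belongs to M^(N). -/
def IsUT (N : ℕ) (θ : ℕ → ℕ → ℕ) : Prop :=
  ∀ i j, ¬(1 ≤ i ∧ i < j ∧ j ≤ N) → θ i j = 0

/-- `S_{i,j,k} = Σ_{a=k+1}^N (θ_{i,a} − θ_{j,a})`. -/
def Sijk (N : ℕ) (θ : ℕ → ℕ → ℕ) (i j k : ℕ) : ℤ :=
  ∑ a ∈ Finset.Icc (k+1) N, ((θ i a : ℤ) - (θ j a : ℤ))

/-- The coefficient `c_N(θ; z₁,…,z_N; q,𝔱)`. -/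
def cfun {K : Type*} [Field K] (N : ℕ) (θ : ℕ → ℕ → ℕ) (q t : K) (z : ℕ → K) : K :=
  ∏ k ∈ Finset.Icc 2 N, ∏ i ∈ Finset.Icc 1 (k-1), ∏ j ∈ Finset.Icc i (k-1),
    ((qPoch (q ^ (Sijk N θ i (j+1) k) * t * z (j+1) / z i) q (θ i k) /
      qPoch (q ^ (Sijk N θ i (j+1) k) * q * z (j+1) / z i) q (θ i k)) *
     (qPoch (q ^ (-(θ j k : ℤ) + Sijk N θ i j k) * (q / t) * z j / z i) q (θ i k) /
      qPoch (q ^ (-(θ j k : ℤ) + Sijk N θ i j k) * z j / z i) q (θ i k)))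

/-- the polytope inequalities defining `Pol_λ` (for `θ ∈ M^(N)`). -/
def PolIneq (N : ℕ) (lam : ℕ → ℕ) (θ : ℕ → ℕ → ℕ) : Prop :=
  ∀ i j, 1 ≤ i → i < j → j ≤ N →
    (θ i j : ℤ) ≤ (lam i : ℤ) - (lam (i+1) : ℤ)
      - ∑ k ∈ Finset.Icc (j+1) N, ((θ i k : ℤ) - (θ (i+1) k : ℤ))

/-- `u_m`-degree of the monomial `∏_{i<j}(y_j/y_i)^{θ_{ij}}`. -/
def wt (N : ℕ) (θ : ℕ → ℕ → ℕ) (m : ℕ) : ℕ :=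
  ∑ i ∈ Finset.Icc 1 m, ∑ j ∈ Finset.Icc (m+1) N, θ i j

abbrev Fqt := FractionRing (MvPolynomial (Fin 2) ℚ)

def qv : Fqt := algebraMap (MvPolynomial (Fin 2) ℚ) Fqt (MvPolynomial.X 0)
def tv : Fqt := algebraMap (MvPolynomial (Fin 2) ℚ) Fqt (MvPolynomial.X 1)

/-- the specialization `z_i = 𝔱^{N-i} q^{λ_i}`. -/
def zspec (N : ℕ) (lam : ℕ → ℕ) : ℕ → Fqt := fun i => tv ^ (N - i) * qv ^ (lam i)

/-!
If `θ` violates the polytope inequality at `(i, j)`, let `D k = λ_i − λ_{i+1} − S_{i,i+1,k}`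
(`polBound`). Then `D N = λ_i − λ_{i+1} ≥ 0` and `D k ≥ D (k+1) − θ_{i,k+1}`, so walking right
from the violated column `j` while `D` stays negative reaches a column `k ≥ j` with
`0 ≤ D k < θ_{i,k}`. Under `z_m = 𝔱^{N−m} q^{λ_m}` the numerator
`(q^{S_{i,i+1,k}} 𝔱 z_{i+1}/z_i; q)_{θ_{i,k}}` of `c_N` equals `(q^{−D k}; q)_{θ_{i,k}}`, which
contains the factor `1 − q^{−D k} q^{D k} = 0`.
-/

theorem Sijk_self (N : ℕ) (θ : ℕ → ℕ → ℕ) (i j : ℕ) : Sijk N θ i j N = 0 := by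
  simp [Sijk]

theorem Sijk_eq_add_Sijk_succ (N : ℕ) (θ : ℕ → ℕ → ℕ) (i j : ℕ) {k : ℕ} (hk : k < N) :
    Sijk N θ i j k = ((θ i (k+1) : ℤ) - θ j (k+1)) + Sijk N θ i j (k+1) := by
  rw [Sijk, Sijk, Finset.Icc_eq_cons_Ioc (by omega), Finset.sum_cons,
    ← Finset.Icc_add_one_left_eq_Ioc]

theorem exists_nonneg_lt_of_lt {D a : ℕ → ℤ} {N j : ℕ} (hN : 0 ≤ D N)
    (hstep : ∀ k < N, D (k+1) - a (k+1) ≤ D k) (hjN : j ≤ N) (hlt : D j < a j) :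
    ∃ k, j ≤ k ∧ k ≤ N ∧ 0 ≤ D k ∧ D k < a k := by
  by_cases hj : 0 ≤ D j
  · exact ⟨j, le_rfl, hjN, hj, hlt⟩
  · have hjN' : j < N := lt_of_le_of_ne hjN (by rintro rfl; exact hj hN)
    obtain ⟨k, hjk, hkN, hk⟩ :=
      exists_nonneg_lt_of_lt hN hstep hjN' (by linarith [hstep j hjN'])
    exact ⟨k, by omega, hkN, hk⟩
termination_by N - j

def polBound (N : ℕ) (lam : ℕ → ℕ) (θ : ℕ → ℕ → ℕ) (i k : ℕ) : ℤ :=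
  lam i - lam (i+1) - Sijk N θ i (i+1) k

theorem exists_polBound_nonneg_lt_of_not_polIneq {N : ℕ} {lam : ℕ → ℕ} {θ : ℕ → ℕ → ℕ}
    (hpart : ∀ i, 1 ≤ i → lam (i+1) ≤ lam i) (h : ¬ PolIneq N lam θ) :
    ∃ i k, 1 ≤ i ∧ i < k ∧ k ≤ N ∧ 0 ≤ polBound N lam θ i k ∧ polBound N lam θ i k < θ i k := by
  simp only [PolIneq, not_forall, not_le] at h
  obtain ⟨i, j, hi, hij, hjN, hlt⟩ := h
  have hN : 0 ≤ polBound N lam θ i N := by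
    have := hpart i hi
    simp only [polBound, Sijk_self]
    omega
  have hstep : ∀ k < N, polBound N lam θ i (k+1) - θ i (k+1) ≤ polBound N lam θ i k := by
    intro k hk
    simp only [polBound, Sijk_eq_add_Sijk_succ N θ i (i+1) hk]
    omega
  obtain ⟨k, hjk, hkN, hk⟩ := exists_nonneg_lt_of_lt (a := fun k => (θ i k : ℤ)) hN hstep hjN hlt
  exact ⟨i, k, hi, by omega, hkN, hk⟩

section

variable {K : Type*}

theorem qPoch_eq_zero_of_mul_pow_eq_one [CommRing K] {a q : K} {m n : ℕ} (hmn : m < n)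
    (h : a * q ^ m = 1) : qPoch a q n = 0 :=
  Finset.prod_eq_zero (Finset.mem_range.2 hmn) (sub_eq_zero.2 h.symm)

theorem cfun_eq_zero_of_qPoch_eq_zero [Field K] {N : ℕ} {θ : ℕ → ℕ → ℕ} {q t : K} {z : ℕ → K}
    {i k : ℕ} (hi : 1 ≤ i) (hik : i < k) (hkN : k ≤ N)
    (h : qPoch (q ^ Sijk N θ i (i+1) k * t * z (i+1) / z i) q (θ i k) = 0) :
    cfun N θ q t z = 0 := by
  unfold cfun
  refine Finset.prod_eq_zero (i := k) (by simp only [Finset.mem_Icc]; omega) ?_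
  refine Finset.prod_eq_zero (i := i) (by simp only [Finset.mem_Icc]; omega) ?_
  refine Finset.prod_eq_zero (i := i) (by simp only [Finset.mem_Icc]; omega) ?_
  rw [h, zero_div, zero_mul]

theorem principal_ratio_eq_zpow [Field K] {q t : K} (hq : q ≠ 0) (ht : t ≠ 0)
    {N i : ℕ} (hiN : i < N) (lam : ℕ → ℕ) :
    t * (t ^ (N - (i+1)) * q ^ lam (i+1)) / (t ^ (N - i) * q ^ lam i)
      = q ^ ((lam (i+1) : ℤ) - lam i) := by
  obtain ⟨n, hn⟩ : ∃ n, N - i = n + 1 := ⟨N - (i+1), by omega⟩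
  rw [hn, show N - (i+1) = n by omega, zpow_sub₀ hq, zpow_natCast, zpow_natCast, pow_succ]
  field_simp

theorem cfun_principal_eq_zero_of_not_polIneq [Field K] {q t : K} (hq : q ≠ 0)
    (ht : t ≠ 0) {N : ℕ} {lam : ℕ → ℕ} (hpart : ∀ i, 1 ≤ i → lam (i+1) ≤ lam i)
    {θ : ℕ → ℕ → ℕ} (h : ¬ PolIneq N lam θ) :
    cfun N θ q t (fun i => t ^ (N - i) * q ^ lam i) = 0 := by
  obtain ⟨i, k, hi, hik, hkN, hD, hDθ⟩ := exists_polBound_nonneg_lt_of_not_polIneq hpart h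
  refine cfun_eq_zero_of_qPoch_eq_zero hi hik hkN
    (qPoch_eq_zero_of_mul_pow_eq_one (m := (polBound N lam θ i k).toNat) (by omega) ?_)
  rw [mul_assoc _ t, mul_div_assoc, principal_ratio_eq_zpow hq ht (by omega), ← zpow_add₀ hq,
    ← zpow_natCast, Int.toNat_of_nonneg hD, ← zpow_add₀ hq, polBound]
  convert zpow_zero q using 2
  ring

end

theorem qv_ne_zero : qv ≠ 0 := by
  simp [qv, MvPolynomial.X_ne_zero]

theorem tv_ne_zero : tv ≠ 0 := by
  simp [tv, MvPolynomial.X_ne_zero]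

theorem c_vanishes_outside_polytope_and_series_terminates_general (N : ℕ) (lam : ℕ → ℕ)
    (hpart : ∀ i, 1 ≤ i → lam (i+1) ≤ lam i) :
    (∀ θ : ℕ → ℕ → ℕ, IsUT N θ → ¬ PolIneq N lam θ →
      cfun N θ qv tv (zspec N lam) = 0) ∧
    ((fun d => ∑ᶠ θ ∈ {θ : ℕ → ℕ → ℕ | IsUT N θ ∧ ∀ m, d m = wt N θ m},
        cfun N θ qv tv (zspec N lam)) : MvPowerSeries ℕ Fqt)
      = fun d => ∑ᶠ θ ∈ {θ : ℕ → ℕ → ℕ |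
          (IsUT N θ ∧ PolIneq N lam θ) ∧ ∀ m, d m = wt N θ m},
        cfun N θ qv tv (zspec N lam) := by
  have hvanish : ∀ θ, ¬ PolIneq N lam θ → cfun N θ qv tv (zspec N lam) = 0 :=
    fun _ => cfun_principal_eq_zero_of_not_polIneq qv_ne_zero tv_ne_zero hpart
  refine ⟨fun θ _ => hvanish θ, funext fun d => finsum_mem_inter_support_eq' _ _ _ fun θ hθ => ?_⟩
  have hpol : PolIneq N lam θ := not_not.1 (mt (hvanish θ) hθ)
  simp only [Set.mem_ofPred_eq, hpol, and_true]

theorem c_vanishes_outside_polytope_and_series_terminates (N : ℕ) (lam : ℕ → ℕ)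
    (hpart : ∀ i, 1 ≤ i → lam (i+1) ≤ lam i) (hsupp : ∀ i, N < i → lam i = 0) :
    (∀ θ : ℕ → ℕ → ℕ, IsUT N θ → ¬ PolIneq N lam θ →
      cfun N θ qv tv (zspec N lam) = 0) ∧
    ((fun d => ∑ᶠ θ ∈ {θ : ℕ → ℕ → ℕ | IsUT N θ ∧ ∀ m, d m = wt N θ m},
        cfun N θ qv tv (zspec N lam)) : MvPowerSeries ℕ Fqt)
      = fun d => ∑ᶠ θ ∈ {θ : ℕ → ℕ → ℕ |
          (IsUT N θ ∧ PolIneq N lam θ) ∧ ∀ m, d m = wt N θ m},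
        cfun N θ qv tv (zspec N lam) :=
  c_vanishes_outside_polytope_and_series_terminates_general N lam hpart
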